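/- Let A and B be independent families of N × N random matrices indexed by the same set J, with all entries having moments of all orders, and assume at least one family is permutation invariant in law. Then for any finite connected directed edge-labelled multigraph T with vertex set V (|V| ≤ N), the injective density of the Hadamard products factorizes: δ⁰_N[T(A∘B)] = δ⁰_N[T(A)] · δ⁰_N[T(B)], where A∘B = (A_j ∘ B_j)_{j∈J} is the family of entry-wise products. -/

import Mathlib

open scoped Classical
open MeasureTheory Filter
open scoped Matrix

/-- A (directed) multigraph on vertex type `V` with edge-index type `E`:
each edge `e` goes from `src e` to `tgt e`. -/
structure Multigraph (V : Type*) (E : Type*) where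
  src : E → V
  tgt : E → V

namespace Multigraph

variable {V E : Type*}

/-- The underlying simple graph (forgetting orientation, multiplicity and loops). -/
def toSimple (G : Multigraph V E) : SimpleGraph V :=
  SimpleGraph.fromRel fun v w => ∃ e, G.src e = v ∧ G.tgt e = w

/-- A multigraph is connected when its underlying simple graph is. -/
def Connected (G : Multigraph V E) : Prop := G.toSimple.Connected

/-- The unordered pair of endpoints of an edge. -/
def ends (G : Multigraph V E) (e : E) : Sym2 V := s(G.src e, G.tgt e)

/-- A multigraph is a tree when it has no loops, no multiple edges, and its
underlying simple graph is a tree (connected and acyclic). -/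
def IsTree (G : Multigraph V E) : Prop :=
  G.toSimple.IsTree ∧ (∀ e, G.src e ≠ G.tgt e) ∧ Function.Injective G.ends

/-- The number of edges having the same (unordered) endpoints as `e`. -/
noncomputable def multiplicity [Fintype E] (G : Multigraph V E) (e : E) : ℕ :=
  (Finset.univ.filter fun e' => G.ends e' = G.ends e).card

/-- A double tree: no loops, the underlying simple graph is a tree, and there are
exactly two edges between each pair of adjacent vertices. -/
def IsDoubleTree [Fintype E] (G : Multigraph V E) : Prop :=
  G.toSimple.IsTree ∧ (∀ e, G.src e ≠ G.tgt e) ∧ ∀ e, G.multiplicity e = 2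

/-- The quotient multigraph obtained by identifying the vertices within each
block of the partition (setoid) `π`, keeping every edge. -/
def quot (G : Multigraph V E) (π : Setoid V) : Multigraph (Quotient π) E where
  src e := Quotient.mk π (G.src e)
  tgt e := Quotient.mk π (G.tgt e)

end Multigraph
open ProbabilityTheory

instance matrixMeasurableSpace {m n α : Type*} [MeasurableSpace α] :
    MeasurableSpace (Matrix m n α) :=
  inferInstanceAs (MeasurableSpace (m → n → α))

/-- The permutation matrix of `σ`: entry `(i,j)` is `1` iff `σ i = j`. -/
def permMat (N : ℕ) (σ : Equiv.Perm (Fin N)) : Matrix (Fin N) (Fin N) ℂ :=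
  Matrix.of fun i j => if σ i = j then 1 else 0

/-- The injective density `δ⁰_N[T(A)]` of a random family `A` of `N × N` matrices on a
finite directed edge-labelled multigraph `T` (edges carry a label `γ e` and an adjoint
marker `ε e`): the expectation of the edge product evaluated at a uniformly random
injection `Φ : V ↪ [N]` chosen independently of `A`. -/
noncomputable def injDensity {V E J Ω : Type*} [Fintype V] [Fintype E]
    [MeasurableSpace Ω] (μ : Measure Ω) (N : ℕ)
    (G : Multigraph V E) (γ : E → J) (ε : E → Bool)
    (A : Ω → J → Matrix (Fin N) (Fin N) ℂ) : ℂ :=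
  (Nat.card (V ↪ Fin N) : ℂ)⁻¹ *
    ∑ φ : V ↪ Fin N, ∫ ω, ∏ e : E,
      (if ε e then (A ω (γ e))ᴴ else A ω (γ e)) (φ (G.src e)) (φ (G.tgt e)) ∂μ

/-!
Evaluating a Hadamard product along a fixed injection `φ` splits the edge product into the
`A`-part times the `B`-part, and by independence the expectation of that product is the product
of expectations. If `A` (say) is permutation invariant in law, its expectation does not depend on
`φ`, since any two injections differ by a permutation of `[N]`, which acts on matrices by
conjugation with a permutation matrix. Averaging over `φ` then factorizes.
-/

lemma Function.Embedding.exists_perm_apply_eq {α β : Type*} [Fintype α] (φ ψ : α ↪ β) :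
    ∃ σ : Equiv.Perm β, ∀ a, σ (ψ a) = φ a := by
  let e : {b // b ∈ Set.range ψ} ≃ {b // b ∈ Set.range φ} :=
    ψ.toEquivRange.symm.trans φ.toEquivRange
  have : Finite {b | b ∈ Set.range ψ} := inferInstanceAs (Finite (Set.range ψ))
  refine ⟨e.extendSubtype, fun a => ?_⟩
  rw [Equiv.extendSubtype_apply_of_mem e _ (Set.mem_range_self a)]
  simp [e, Function.Embedding.toEquivRange_symm_apply_self]

lemma inv_natCard_mul_sum_mul_of_forall_eq {α K : Type*} [Fintype α] [Field K] {f g : α → K}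
    (hf : ∀ a b, f a = f b) :
    (Nat.card α : K)⁻¹ * ∑ a, f a * g a
      = ((Nat.card α : K)⁻¹ * ∑ a, f a) * ((Nat.card α : K)⁻¹ * ∑ a, g a) := by
  by_cases hc : (Nat.card α : K) = 0
  · rw [hc]
    simp
  obtain ⟨⟨a₀⟩, -⟩ := Nat.card_ne_zero.mp fun h : Nat.card α = 0 => hc (by rw [h, Nat.cast_zero])
  have hsum_mul : ∑ a, f a * g a = f a₀ * ∑ a, g a := by
    rw [Finset.mul_sum]
    exact Finset.sum_congr rfl fun a _ => by rw [hf a a₀]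
  have hsum : ∑ a, f a = Nat.card α * f a₀ := by
    simp [hf _ a₀, Nat.card_eq_fintype_card]
  rw [hsum_mul, hsum]
  field_simp

lemma permMat_mul_mul_conjTranspose {N : ℕ} (σ : Equiv.Perm (Fin N))
    (M : Matrix (Fin N) (Fin N) ℂ) :
    permMat N σ * M * (permMat N σ)ᴴ = M.submatrix σ σ := by
  ext i j
  simp [Matrix.mul_apply, permMat, Matrix.conjTranspose_apply, apply_ite]

lemma Matrix.measurable_submatrix {l m n o α : Type*} [MeasurableSpace α] (r : l → m)
    (c : o → n) : Measurable fun M : Matrix m n α => M.submatrix r c :=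
  measurable_pi_lambda _ fun i => measurable_pi_lambda _ fun k =>
    (measurable_pi_apply (c k)).comp (measurable_pi_apply (r i))

namespace Multigraph

variable {V E J : Type*} [Fintype E] (G : Multigraph V E) (γ : E → J) (ε : E → Bool)

/-- The paper's `∏_{e = (v, w)} M_{γ(e)}^{ε(e)}(φ(v), φ(w))`, whose expectation `injDensity`
averages over injective `φ`. -/
def edgeProd {n : Type*} (φ : V → n) (M : J → Matrix n n ℂ) : ℂ :=
  ∏ e, (if ε e then (M (γ e))ᴴ else M (γ e)) (φ (G.src e)) (φ (G.tgt e))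

lemma edgeProd_hadamard {n : Type*} (φ : V → n) (M M' : J → Matrix n n ℂ) :
    G.edgeProd γ ε φ (fun j => M j ⊙ M' j) = G.edgeProd γ ε φ M * G.edgeProd γ ε φ M' := by
  rw [edgeProd, edgeProd, edgeProd, ← Finset.prod_mul_distrib]
  refine Finset.prod_congr rfl fun e _ => ?_
  cases ε e <;> simp [Matrix.conjTranspose_apply, star_mul']

lemma edgeProd_submatrix {m n : Type*} (φ : V → m) (σ : m → n) (M : J → Matrix n n ℂ) :
    G.edgeProd γ ε φ (fun j => (M j).submatrix σ σ) = G.edgeProd γ ε (σ ∘ φ) M := by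
  refine Finset.prod_congr rfl fun e _ => ?_
  cases ε e <;> simp

lemma measurable_edgeProd {n : Type*} (φ : V → n) : Measurable (G.edgeProd γ ε φ) := by
  refine Finset.measurable_prod _ fun e _ => ?_
  have hentry : ∀ i j : n, Measurable fun M : J → Matrix n n ℂ => M (γ e) i j :=
    fun i j => (measurable_pi_apply j).comp ((measurable_pi_apply i).comp (measurable_pi_apply _))
  cases ε e
  · exact hentry _ _
  · exact continuous_star.measurable.comp (hentry _ _)

section Expectation

variable {Ω : Type*} [MeasurableSpace Ω] {μ : Measure Ω}

lemma integral_edgeProd_hadamard {n : Type*} {A B : Ω → J → Matrix n n ℂ}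
    (hA : AEMeasurable A μ) (hB : AEMeasurable B μ) (hAB : IndepFun A B μ) (φ : V → n) :
    ∫ ω, G.edgeProd γ ε φ (fun j => A ω j ⊙ B ω j) ∂μ
      = (∫ ω, G.edgeProd γ ε φ (A ω) ∂μ) * ∫ ω, G.edgeProd γ ε φ (B ω) ∂μ := by
  simp only [edgeProd_hadamard]
  exact hAB.integral_fun_comp_mul_comp hA hB (G.measurable_edgeProd γ ε φ).aestronglyMeasurable
    (G.measurable_edgeProd γ ε φ).aestronglyMeasurable

variable [Fintype V]

lemma integral_edgeProd_eq_of_perm_invariant {N : ℕ} {C : Ω → J → Matrix (Fin N) (Fin N) ℂ}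
    (hC : AEMeasurable C μ)
    (hinv : ∀ σ : Equiv.Perm (Fin N),
      Measure.map (fun ω j => permMat N σ * C ω j * (permMat N σ)ᴴ) μ = Measure.map C μ)
    (φ ψ : V ↪ Fin N) :
    ∫ ω, G.edgeProd γ ε φ (C ω) ∂μ = ∫ ω, G.edgeProd γ ε ψ (C ω) ∂μ := by
  obtain ⟨σ, hσ⟩ := φ.exists_perm_apply_eq ψ
  let conj : (J → Matrix (Fin N) (Fin N) ℂ) → J → Matrix (Fin N) (Fin N) ℂ :=
    fun M j => (M j).submatrix σ σ
  have hconj : Measurable conj :=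
    measurable_pi_lambda _ fun j => (Matrix.measurable_submatrix σ σ).comp (measurable_pi_apply j)
  have hconj_eq : (fun ω j => permMat N σ * C ω j * (permMat N σ)ᴴ) = conj ∘ C := by
    funext ω j
    exact permMat_mul_mul_conjTranspose σ (C ω j)
  have hf := G.measurable_edgeProd γ ε ψ
  calc ∫ ω, G.edgeProd γ ε φ (C ω) ∂μ = ∫ ω, G.edgeProd γ ε ψ (conj (C ω)) ∂μ := by
        simp only [conj, edgeProd_submatrix]
        congr! with ω
        funext a
        exact (hσ a).symm
    _ = ∫ M, G.edgeProd γ ε ψ M ∂(Measure.map (conj ∘ C) μ) :=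
        (integral_map (hconj.comp_aemeasurable hC) hf.aestronglyMeasurable).symm
    _ = ∫ M, G.edgeProd γ ε ψ M ∂(Measure.map C μ) := by rw [← hconj_eq, hinv σ]
    _ = ∫ ω, G.edgeProd γ ε ψ (C ω) ∂μ := integral_map hC hf.aestronglyMeasurable

lemma injDensity_eq (N : ℕ) (A : Ω → J → Matrix (Fin N) (Fin N) ℂ) :
    injDensity μ N G γ ε A = (Nat.card (V ↪ Fin N) : ℂ)⁻¹ * ∑ φ : V ↪ Fin N,
      ∫ ω, G.edgeProd γ ε φ (A ω) ∂μ :=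
  rfl

lemma injDensity_hadamard_eq_mul_of_perm_invariant {N : ℕ}
    {A B : Ω → J → Matrix (Fin N) (Fin N) ℂ}
    (hA : AEMeasurable A μ) (hB : AEMeasurable B μ) (hAB : IndepFun A B μ)
    (hinv : ∀ σ : Equiv.Perm (Fin N),
      Measure.map (fun ω j => permMat N σ * A ω j * (permMat N σ)ᴴ) μ = Measure.map A μ) :
    injDensity μ N G γ ε (fun ω j => A ω j ⊙ B ω j)
      = injDensity μ N G γ ε A * injDensity μ N G γ ε B := by
  simp only [injDensity_eq, G.integral_edgeProd_hadamard γ ε hA hB hAB]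
  exact inv_natCard_mul_sum_mul_of_forall_eq fun φ ψ =>
    G.integral_edgeProd_eq_of_perm_invariant γ ε hA hinv φ ψ

end Expectation

end Multigraph

theorem injDensity_hadamard_eq_mul_general
    {V E J Ω : Type*} [Fintype V] [Fintype E]
    [MeasurableSpace Ω] (μ : Measure Ω) (N : ℕ)
    (G : Multigraph V E) (γ : E → J) (ε : E → Bool)
    (A B : Ω → J → Matrix (Fin N) (Fin N) ℂ)
    (hAmeas : Measurable A) (hBmeas : Measurable B)
    (hIndep : IndepFun A B μ)
    (hInv : (∀ σ : Equiv.Perm (Fin N),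
        Measure.map (fun ω j => permMat N σ * A ω j * (permMat N σ)ᴴ) μ
          = Measure.map A μ) ∨
      (∀ σ : Equiv.Perm (Fin N),
        Measure.map (fun ω j => permMat N σ * B ω j * (permMat N σ)ᴴ) μ
          = Measure.map B μ)) :
    injDensity μ N G γ ε (fun ω j => Matrix.hadamard (A ω j) (B ω j))
      = injDensity μ N G γ ε A * injDensity μ N G γ ε B := by
  rcases hInv with hA | hB
  · exact G.injDensity_hadamard_eq_mul_of_perm_invariant γ ε hAmeas.aemeasurable
      hBmeas.aemeasurable hIndep hA
  · simp only [Matrix.hadamard_comm (A _ _), mul_comm (injDensity μ N G γ ε A)]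
    exact G.injDensity_hadamard_eq_mul_of_perm_invariant γ ε hBmeas.aemeasurable
      hAmeas.aemeasurable hIndep.symm hB

/-- For independent random families `A`, `B` of `N × N` matrices
(one of them permutation invariant in law), the injective density of Hadamard
products factorizes: `δ⁰_N[T(A∘B)] = δ⁰_N[T(A)]·δ⁰_N[T(B)]`. -/
theorem injDensity_hadamard_eq_mul
    {V E J Ω : Type*} [Fintype V] [Fintype E]
    [MeasurableSpace Ω] (μ : Measure Ω) [IsProbabilityMeasure μ]
    (N : ℕ) (hVN : Fintype.card V ≤ N)
    (G : Multigraph V E) (hconn : G.Connected) (γ : E → J) (ε : E → Bool)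
    (A B : Ω → J → Matrix (Fin N) (Fin N) ℂ)
    (hAmeas : Measurable A) (hBmeas : Measurable B)
    (hIndep : IndepFun A B μ)
    (hInv : (∀ σ : Equiv.Perm (Fin N),
        Measure.map (fun ω j => permMat N σ * A ω j * (permMat N σ)ᴴ) μ
          = Measure.map A μ) ∨
      (∀ σ : Equiv.Perm (Fin N),
        Measure.map (fun ω j => permMat N σ * B ω j * (permMat N σ)ᴴ) μ
          = Measure.map B μ))
    (hIntA : ∀ φ : V ↪ Fin N, Integrable (fun ω => ∏ e : E,
      (if ε e then (A ω (γ e))ᴴ else A ω (γ e)) (φ (G.src e)) (φ (G.tgt e))) μ)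
    (hIntB : ∀ φ : V ↪ Fin N, Integrable (fun ω => ∏ e : E,
      (if ε e then (B ω (γ e))ᴴ else B ω (γ e)) (φ (G.src e)) (φ (G.tgt e))) μ) :
    injDensity μ N G γ ε (fun ω j => Matrix.hadamard (A ω j) (B ω j))
      = injDensity μ N G γ ε A * injDensity μ N G γ ε B :=
  injDensity_hadamard_eq_mul_general μ N G γ ε A B hAmeas hBmeas hIndep hInv
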